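/- High-frequency damping from effective velocities: suppose θₖ satisfies ∂ₜθₖ + u·∇θₖ + (α/μ₀)𝒫θₖ + ((1+α)/(λ₀+2μ₀))𝒫⊥θₖ = Gₖ in L², where 𝒫, 𝒫⊥ are the orthogonal Leray projections. Then with c₀ = min(α/μ₀, (1+α)/(λ₀+2μ₀)) > 0, ‖θₖ(t)‖_{L²} + c₀∫₀ᵗ‖θₖ‖_{L²}ds ≤ ‖θₖ(0)‖_{L²} + ∫₀ᵗ(‖Gₖ‖_{L²} + (1/2)‖div u‖_{L^∞}‖θₖ‖_{L²})ds. -/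

import Mathlib

open MeasureTheory intervalIntegral

set_option maxHeartbeats 1000000

/-- High-frequency damping from effective velocities: if `θₖ` solves
`∂ₜθₖ + u·∇θₖ + (α/μ₀)𝒫θₖ + ((1+α)/(λ₀+2μ₀))𝒫⊥θₖ = Gₖ` in `L²`, then with
`c₀ = min(α/μ₀, (1+α)/(λ₀+2μ₀))`,
`‖θₖ(t)‖ + c₀∫₀ᵗ‖θₖ‖ ≤ ‖θₖ(0)‖ + ∫₀ᵗ(‖Gₖ‖ + (1/2)‖div u‖_∞‖θₖ‖)`.
The Hilbert space `H` models `L²(ℝⁿ;ℝⁿ)`, `P`, `Pperp` the orthogonal Leray projections,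
`B t` the transport term `u·∇θₖ` (satisfying the transport energy bound with
`d t = ‖div u(t)‖_{L^∞}`). -/
theorem high_freq_damping {H : Type*} [NormedAddCommGroup H] [InnerProductSpace ℝ H]
    (α lam₀ μ₀ : ℝ) (hα : 0 < α) (hlam : 0 < lam₀) (hμ : 0 < μ₀)
    (P Pperp : H →L[ℝ] H)
    (hsum : ∀ v, P v + Pperp v = v)
    (horth : ∀ v w : H, (inner ℝ (P v) (Pperp w) : ℝ) = 0)
    (θ B G : ℝ → H) (d : ℝ → ℝ) (hd : ∀ t, 0 ≤ d t)
    (hθc : Continuous θ) (hGc : Continuous G) (hdc : Continuous d)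
    (hB : ∀ t, |(inner ℝ (B t) (θ t) : ℝ)| ≤ (1 / 2) * d t * ‖θ t‖ ^ 2)
    (heq : ∀ t, HasDerivAt θ
      (-(B t) - (α / μ₀) • P (θ t) - ((1 + α) / (lam₀ + 2 * μ₀)) • Pperp (θ t) + G t) t) :
    ∀ t : ℝ, 0 ≤ t →
      ‖θ t‖ + min (α / μ₀) ((1 + α) / (lam₀ + 2 * μ₀)) * ∫ s in (0 : ℝ)..t, ‖θ s‖ ≤
        ‖θ 0‖ + ∫ s in (0 : ℝ)..t, (‖G s‖ + (1 / 2) * d s * ‖θ s‖) := by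
  intro t ht
  set a : ℝ := α / μ₀ with ha_def
  set b : ℝ := (1 + α) / (lam₀ + 2 * μ₀) with hb_def
  have ha : 0 < a := div_pos hα hμ
  have hb : 0 < b := div_pos (by linarith) (by linarith)
  set c₀ : ℝ := min a b with hc₀_def
  have hc₀ : 0 < c₀ := lt_min ha hb
  set θ' : ℝ → H := fun s => -(B s) - a • P (θ s) - b • Pperp (θ s) + G s with hθ'_def
  -- pointwise energy inequality
  have key : ∀ s, (inner ℝ (θ' s) (θ s) : ℝ) ≤
      ‖G s‖ * ‖θ s‖ + (1 / 2) * d s * ‖θ s‖ ^ 2 - c₀ * ‖θ s‖ ^ 2 := by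
    intro s
    have hPθ : (inner ℝ (P (θ s)) (θ s) : ℝ) = ‖P (θ s)‖ ^ 2 := by
      calc (inner ℝ (P (θ s)) (θ s) : ℝ)
          = (inner ℝ (P (θ s)) (P (θ s) + Pperp (θ s)) : ℝ) := by rw [hsum]
        _ = ‖P (θ s)‖ ^ 2 := by
            rw [inner_add_right, horth, real_inner_self_eq_norm_sq]; ring
    have hPpθ : (inner ℝ (Pperp (θ s)) (θ s) : ℝ) = ‖Pperp (θ s)‖ ^ 2 := by
      calc (inner ℝ (Pperp (θ s)) (θ s) : ℝ)
          = (inner ℝ (Pperp (θ s)) (P (θ s) + Pperp (θ s)) : ℝ) := by rw [hsum]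
        _ = ‖Pperp (θ s)‖ ^ 2 := by
            rw [inner_add_right, real_inner_comm (P (θ s)) (Pperp (θ s)), horth,
              real_inner_self_eq_norm_sq]; ring
    have hpyth : ‖θ s‖ ^ 2 = ‖P (θ s)‖ ^ 2 + ‖Pperp (θ s)‖ ^ 2 := by
      calc ‖θ s‖ ^ 2 = ‖P (θ s) + Pperp (θ s)‖ ^ 2 := by rw [hsum]
        _ = ‖P (θ s)‖ ^ 2 + ‖Pperp (θ s)‖ ^ 2 := by
            rw [norm_add_sq_real, horth]; ring
    have hG : (inner ℝ (G s) (θ s) : ℝ) ≤ ‖G s‖ * ‖θ s‖ := real_inner_le_norm _ _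
    have hBs : -(inner ℝ (B s) (θ s) : ℝ) ≤ (1 / 2) * d s * ‖θ s‖ ^ 2 :=
      by linarith [(abs_le.mp (hB s)).1]
    have hc : c₀ * ‖θ s‖ ^ 2 ≤ a * ‖P (θ s)‖ ^ 2 + b * ‖Pperp (θ s)‖ ^ 2 := by
      have h1 : c₀ ≤ a := min_le_left _ _
      have h2 : c₀ ≤ b := min_le_right _ _
      nlinarith [sq_nonneg ‖P (θ s)‖, sq_nonneg ‖Pperp (θ s)‖]
    have hexp : (inner ℝ (θ' s) (θ s) : ℝ)
        = -(inner ℝ (B s) (θ s) : ℝ) - a * (inner ℝ (P (θ s)) (θ s) : ℝ)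
          - b * (inner ℝ (Pperp (θ s)) (θ s) : ℝ) + (inner ℝ (G s) (θ s) : ℝ) := by
      simp [hθ'_def, inner_add_left, inner_sub_left, inner_neg_left, real_inner_smul_left]
    rw [hexp, hPθ, hPpθ]
    linarith
  -- continuity facts
  have hθn : Continuous fun s => ‖θ s‖ := hθc.norm
  have hf1c : Continuous fun s => ‖G s‖ + (1 / 2) * d s * ‖θ s‖ :=
    hGc.norm.add ((continuous_const.mul hdc).mul hθn)
  have main : ∀ ε : ℝ, 0 < ε →
      ‖θ t‖ + c₀ * ∫ s in (0 : ℝ)..t, ‖θ s‖ ≤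
        (‖θ 0‖ + ∫ s in (0 : ℝ)..t, (‖G s‖ + (1 / 2) * d s * ‖θ s‖)) + ε * (1 + c₀ * t) := by
    intro ε hε
    set φ : ℝ → ℝ := fun s => Real.sqrt (‖θ s‖ ^ 2 + ε ^ 2) with hφ_def
    have hφpos : ∀ s, 0 < φ s := fun s => Real.sqrt_pos.mpr (by positivity)
    have hφge : ∀ s, ‖θ s‖ ≤ φ s := by
      intro s
      calc ‖θ s‖ = Real.sqrt (‖θ s‖ ^ 2) := (Real.sqrt_sq (norm_nonneg _)).symm
        _ ≤ φ s := Real.sqrt_le_sqrt (by nlinarith)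
    have hφle : ∀ s, φ s ≤ ‖θ s‖ + ε := by
      intro s
      calc φ s ≤ Real.sqrt ((‖θ s‖ + ε) ^ 2) :=
            Real.sqrt_le_sqrt (by nlinarith [norm_nonneg (θ s)])
        _ = ‖θ s‖ + ε := Real.sqrt_sq (by positivity)
    set bnd : ℝ → ℝ := fun s => ‖G s‖ + (1 / 2) * d s * ‖θ s‖ - c₀ * ‖θ s‖ + c₀ * ε with hbnd_def
    have hbndc : Continuous bnd :=
      (hf1c.sub (continuous_const.mul hθn)).add continuous_const
    set ψ : ℝ → ℝ := fun u => ∫ s in (0 : ℝ)..u, bnd s with hψ_def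
    have hψd : ∀ s, HasDerivAt ψ (bnd s) s := fun s =>
      (hbndc.integral_hasStrictDerivAt 0 s).hasDerivAt
    have hφd : ∀ s, HasDerivAt φ ((inner ℝ (θ' s) (θ s) : ℝ) / φ s) s := by
      intro s
      have h1 : HasDerivAt (fun u => (inner ℝ (θ u) (θ u) : ℝ))
          ((inner ℝ (θ s) (θ' s) : ℝ) + (inner ℝ (θ' s) (θ s) : ℝ)) s :=
        HasDerivAt.inner ℝ (heq s) (heq s)
      have h2 : HasDerivAt (fun u => ‖θ u‖ ^ 2 + ε ^ 2)
          (2 * (inner ℝ (θ' s) (θ s) : ℝ)) s := by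
        have h1' := h1.add_const (ε ^ 2)
        simp only [real_inner_self_eq_norm_sq] at h1'
        have e : 2 * (inner ℝ (θ' s) (θ s) : ℝ) = (inner ℝ (θ s) (θ' s) : ℝ) + (inner ℝ (θ' s) (θ s) : ℝ) := by
          rw [real_inner_comm (θ s) (θ' s)]; ring
        rw [e]; exact h1'
      have h3 := h2.sqrt (ne_of_gt (by positivity))
      convert h3 using 1
      rw [hφ_def]
      field_simp
    have hder : ∀ s, (inner ℝ (θ' s) (θ s) : ℝ) / φ s ≤ bnd s := by
      intro s
      rw [div_le_iff₀ (hφpos s)]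
      have hk := key s
      have h1 := hφge s
      have h2 := hφle s
      have h3 := hφpos s
      have hg0 : (0:ℝ) ≤ ‖G s‖ := norm_nonneg _
      have hd0 := hd s
      have ht0 : (0:ℝ) ≤ ‖θ s‖ := norm_nonneg _
      have e1 : ‖G s‖ * ‖θ s‖ ≤ ‖G s‖ * φ s := mul_le_mul_of_nonneg_left h1 hg0
      have e2 : (1/2) * d s * ‖θ s‖ ^ 2 ≤ (1/2) * d s * ‖θ s‖ * φ s := by
        have hm := mul_le_mul_of_nonneg_left h1
          (mul_nonneg (mul_nonneg (by norm_num : (0:ℝ) ≤ 1/2) hd0) ht0)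
        calc (1/2) * d s * ‖θ s‖ ^ 2 = (1/2) * d s * ‖θ s‖ * ‖θ s‖ := by ring
          _ ≤ (1/2) * d s * ‖θ s‖ * φ s := hm
      have base : ‖θ s‖ * φ s ≤ ‖θ s‖ ^ 2 + ε * φ s := by
        have k1 : ‖θ s‖ * (φ s - ‖θ s‖) ≤ φ s * (φ s - ‖θ s‖) :=
          mul_le_mul_of_nonneg_right h1 (sub_nonneg.mpr h1)
        have k2 : φ s * (φ s - ‖θ s‖) ≤ φ s * ε :=
          mul_le_mul_of_nonneg_left (by linarith) h3.le
        nlinarith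
      have e3 : c₀ * ‖θ s‖ * φ s ≤ c₀ * ‖θ s‖ ^ 2 + c₀ * ε * φ s := by
        have hm := mul_le_mul_of_nonneg_left base hc₀.le
        calc c₀ * ‖θ s‖ * φ s = c₀ * (‖θ s‖ * φ s) := by ring
          _ ≤ c₀ * (‖θ s‖ ^ 2 + ε * φ s) := hm
          _ = c₀ * ‖θ s‖ ^ 2 + c₀ * ε * φ s := by ring
      calc (inner ℝ (θ' s) (θ s) : ℝ)
          ≤ ‖G s‖ * ‖θ s‖ + (1 / 2) * d s * ‖θ s‖ ^ 2 - c₀ * ‖θ s‖ ^ 2 := hk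
        _ ≤ ‖G s‖ * φ s + (1/2) * d s * ‖θ s‖ * φ s - c₀ * ‖θ s‖ * φ s + c₀ * ε * φ s := by
            linarith
        _ = bnd s * φ s := by simp only [hbnd_def]; ring
    -- monotone comparison
    have hmono : AntitoneOn (fun u => φ u - ψ u) Set.univ := by
      apply antitoneOn_of_deriv_nonpos convex_univ
      · exact fun x _ => (((hφd x).sub (hψd x)).continuousAt).continuousWithinAt
      · intro x _
        exact ((hφd x).sub (hψd x)).differentiableAt.differentiableWithinAt
      · intro x _
        rw [show (fun u => φ u - ψ u) = φ - ψ from rfl, ((hφd x).sub (hψd x)).deriv]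
        linarith [hder x]
    have hcomp : φ t - ψ t ≤ φ 0 - ψ 0 :=
      hmono (Set.mem_univ 0) (Set.mem_univ t) ht
    have hψ0 : ψ 0 = 0 := by simp [hψ_def]
    -- split the integral of bnd
    have i1 : IntervalIntegrable (fun s => ‖G s‖ + (1 / 2) * d s * ‖θ s‖) volume 0 t :=
      hf1c.intervalIntegrable 0 t
    have i2 : IntervalIntegrable (fun s => c₀ * ‖θ s‖) volume 0 t :=
      (continuous_const.mul hθn).intervalIntegrable 0 t
    have i3 : IntervalIntegrable (fun _ : ℝ => c₀ * ε) volume 0 t :=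
      intervalIntegrable_const
    have hsplit : ψ t = (∫ s in (0 : ℝ)..t, (‖G s‖ + (1 / 2) * d s * ‖θ s‖))
        - c₀ * (∫ s in (0 : ℝ)..t, ‖θ s‖) + c₀ * ε * t := by
      show (∫ s in (0 : ℝ)..t, bnd s) = _
      simp only [hbnd_def]
      rw [intervalIntegral.integral_add (i1.sub i2) i3, intervalIntegral.integral_sub i1 i2,
        intervalIntegral.integral_const_mul, intervalIntegral.integral_const, smul_eq_mul]
      ring
    rw [hψ0, hsplit] at hcomp
    have h0 : φ 0 ≤ ‖θ 0‖ + ε := hφle 0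
    have hT : ‖θ t‖ ≤ φ t := hφge t
    have hid : ε * (1 + c₀ * t) = ε + c₀ * ε * t := by ring
    linarith
  -- let ε → 0
  apply le_of_forall_pos_le_add
  intro δ hδ
  have hpos : (0:ℝ) < 1 + c₀ * t := by positivity
  have h1 := main (δ / (1 + c₀ * t)) (by positivity)
  have h2 : δ / (1 + c₀ * t) * (1 + c₀ * t) = δ := div_mul_cancel₀ _ (ne_of_gt hpos)
  linarith
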